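/- arXiv:0811.3589 — 8 statements merged into one kernel-verified Lean document; each statement's English description precedes it below -/
import Mathlib

section
/- Let P be a probability distribution on a finite alphabet X and ε > 0. The probability under the product distribution P^n that a sequence x^n is ε-typical is at least 1 - 2|X| exp(-nε²/3), where x^n is ε-typical if for every x ∈ X, |N(x|x^n) - P(x)n| ≤ εn and N(x|x^n) = 0 whenever P(x) = 0 (N(x|x^n) is the number of occurrences of x in x^n). -/
/-! For a letter `x`, `N(x|xⁿ) = ∑ᵢ 1[xᵢ = x]` is a sum of `n` independent `[0, 1]`-valued
variables with mean `P x`. The exponential Markov inequality at `t = 2ε/3`, the bound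
`e^{tc} ≤ 1 + c(e^t - 1)` for `c ∈ [0, 1]` (convexity) and `e^t ≤ 1 + t + 3t²/4` for `|t| ≤ 1`
bound the upper tail `N(x|xⁿ) - P(x)n > εn` by `exp(-nε²/3)`; the lower tail is the upper tail
of `1 - 1[· = x]`. A union bound over these `2|X|` tails covers every atypical sequence of
positive probability: a sequence using a letter of probability zero has probability zero. -/

open Finset Real

namespace Real

theorem exp_le_one_add_add_three_div_four_mul_sq {x : ℝ} (hx : |x| ≤ 1) :
    exp x ≤ 1 + x + 3 / 4 * x ^ 2 := by
  have h := (abs_le.1 (exp_bound (n := 2) hx (by norm_num))).2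
  have hsum : ∑ m ∈ range 2, x ^ m / m.factorial = 1 + x := by simp [sum_range_succ]
  have hcoef : ((Nat.succ 2 : ℕ) : ℝ) / ((Nat.factorial 2 : ℕ) * (2 : ℕ)) = 3 / 4 := by norm_num
  rw [hsum, hcoef, sq_abs] at h
  linarith

theorem exp_mul_le_one_add_mul_exp_sub_one (t : ℝ) {c : ℝ} (hc0 : 0 ≤ c) (hc1 : c ≤ 1) :
    exp (t * c) ≤ 1 + c * (exp t - 1) := by
  have h := convexOn_exp.2 (Set.mem_univ 0) (Set.mem_univ t) (sub_nonneg.2 hc1) hc0 (by ring)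
  simp only [smul_eq_mul, mul_zero, zero_add, exp_zero, mul_one] at h
  rw [mul_comm]
  linarith

/-- The exponent of the Chernoff bound at `t = 2ε/3`, the minimiser of `3t²/4 - tε`. -/
theorem chernoff_exponent_le {μ ε : ℝ} (hμ0 : 0 ≤ μ) (hμ1 : μ ≤ 1) (hε0 : 0 ≤ ε)
    (hε1 : ε ≤ 1) :
    μ * (exp (2 * ε / 3) - 1) - 2 * ε / 3 * (μ + ε) ≤ -(ε ^ 2 / 3) := by
  have hexp := exp_le_one_add_add_three_div_four_mul_sq (x := 2 * ε / 3)
    (by rw [abs_of_nonneg (by positivity)]; linarith)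
  nlinarith [mul_le_mul_of_nonneg_left hexp hμ0, sq_nonneg ε]

end Real

theorem Finset.sum_filter_lt_le_sum_exp_mul {α : Type*} (s : Finset α) {w : α → ℝ}
    (hw : ∀ a ∈ s, 0 ≤ w a) (S : α → ℝ) (b : ℝ) {t : ℝ} (ht : 0 ≤ t) :
    ∑ a ∈ s with b < S a, w a ≤ ∑ a ∈ s, exp (t * (S a - b)) * w a := by
  rw [sum_filter]
  refine sum_le_sum fun a ha => ?_
  split_ifs with h
  · exact le_mul_of_one_le_left (hw a ha) (one_le_exp (by nlinarith))
  · exact mul_nonneg (exp_pos _).le (hw a ha)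

theorem Finset.sum_filter_lt_abs_le {α : Type*} (s : Finset α) {w : α → ℝ}
    (hw : ∀ a ∈ s, 0 ≤ w a) (d : α → ℝ) (b : ℝ) :
    ∑ a ∈ s with b < |d a|, w a ≤ ∑ a ∈ s with b < d a, w a + ∑ a ∈ s with b < -d a, w a := by
  classical
  simp only [lt_abs, filter_or]
  rw [← sum_union_inter]
  exact le_add_of_nonneg_right (sum_nonneg fun a ha => hw a (mem_filter.1 (mem_inter.1 ha).1).1)

theorem Finset.one_sub_sum_sum_filter_le_sum_filter {α ι : Type*} {s : Finset α} {t : Finset ι}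
    {w : α → ℝ} (hs : ∑ a ∈ s, w a = 1) (hw : ∀ a ∈ s, 0 ≤ w a)
    {p : α → Prop} [DecidablePred p] {q : ι → α → Prop} [∀ i, DecidablePred (q i)]
    (h : ∀ a ∈ s, w a ≠ 0 → ¬p a → ∃ i ∈ t, q i a) :
    1 - ∑ i ∈ t, ∑ a ∈ s with q i a, w a ≤ ∑ a ∈ s with p a, w a := by
  have hunion : ∑ a ∈ s with ¬p a, w a ≤ ∑ i ∈ t, ∑ a ∈ s with q i a, w a := by
    simp only [sum_filter]
    rw [sum_comm]
    refine sum_le_sum fun a ha => ?_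
    have hnonneg : ∀ i ∈ t, 0 ≤ if q i a then w a else 0 := fun i _ => by
      split_ifs
      exacts [hw a ha, le_rfl]
    split_ifs with hpa
    · exact sum_nonneg hnonneg
    · by_cases hwa : w a = 0
      · exact hwa ▸ sum_nonneg hnonneg
      obtain ⟨i, hi, hqi⟩ := h a ha hwa hpa
      simpa [hqi] using single_le_sum hnonneg hi
  linarith [sum_filter_add_sum_filter_not s p w]

theorem exists_lt_abs_of_not_typical {X : Type*} [DecidableEq X] {n : ℕ} {P : X → ℝ} {ε : ℝ}
    {f : Fin n → X} (hf : ∏ i, P (f i) ≠ 0)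
    (h : ¬∀ x, |(#{i | f i = x} : ℝ) - P x * n| ≤ ε * n ∧ (P x = 0 → #{i | f i = x} = 0)) :
    ∃ x, ε * n < |(#{i | f i = x} : ℝ) - P x * n| := by
  push Not at h
  obtain ⟨x, hx⟩ := h
  refine ⟨x, not_le.1 fun hle => ?_⟩
  obtain ⟨hPx, hcard⟩ := hx hle
  obtain ⟨i, hi⟩ := card_ne_zero.1 hcard
  exact hf (prod_eq_zero (mem_univ i) ((mem_filter.1 hi).2 ▸ hPx))

section Sequences

variable {X : Type*} [Fintype X] {n : ℕ} {P : X → ℝ}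

theorem sum_exp_mul_sum_mul_prod_eq_pow (c : X → ℝ) (t : ℝ) :
    ∑ f : Fin n → X, exp (t * ∑ i, c (f i)) * ∏ i, P (f i) =
      (∑ y, exp (t * c y) * P y) ^ n := by
  rw [Fintype.sum_pow]
  refine sum_congr rfl fun f _ => ?_
  rw [mul_sum, exp_sum, prod_mul_distrib]

theorem sum_exp_mul_mul_le_exp (hP0 : ∀ x, 0 ≤ P x) (hP1 : ∑ x, P x = 1) {c : X → ℝ}
    (hc0 : ∀ x, 0 ≤ c x) (hc1 : ∀ x, c x ≤ 1) (t : ℝ) :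
    ∑ y, exp (t * c y) * P y ≤ exp ((∑ y, c y * P y) * (exp t - 1)) :=
  calc ∑ y, exp (t * c y) * P y ≤ ∑ y, (1 + c y * (exp t - 1)) * P y :=
        sum_le_sum fun y _ => mul_le_mul_of_nonneg_right
          (exp_mul_le_one_add_mul_exp_sub_one t (hc0 y) (hc1 y)) (hP0 y)
    _ = (∑ y, c y * P y) * (exp t - 1) + 1 := by
        simp only [add_mul, one_mul, sum_add_distrib, hP1, sum_mul]
        rw [add_comm]
        exact congrArg (· + 1) (sum_congr rfl fun _ _ => by ring)
    _ ≤ exp ((∑ y, c y * P y) * (exp t - 1)) := add_one_le_exp _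

theorem chernoff_upper_tail_le (hP0 : ∀ x, 0 ≤ P x) (hP1 : ∑ x, P x = 1)
    {c : X → ℝ} (hc0 : ∀ x, 0 ≤ c x) (hc1 : ∀ x, c x ≤ 1) {ε : ℝ} (hε : 0 < ε) :
    ∑ f : Fin n → X with ε * n < ∑ i, c (f i) - (∑ y, c y * P y) * n, ∏ i, P (f i) ≤
      exp (-(n * ε ^ 2) / 3) := by
  set μ := ∑ y, c y * P y
  have hμ0 : 0 ≤ μ := sum_nonneg fun y _ => mul_nonneg (hc0 y) (hP0 y)
  have hμ1 : μ ≤ 1 := hP1 ▸ sum_le_sum fun y _ => mul_le_of_le_one_left (hP0 y) (hc1 y)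
  by_cases hε1 : ε ≤ 1
  · set t := 2 * ε / 3
    calc _ ≤ ∑ f : Fin n → X, exp (t * (∑ i, c (f i) - (ε * n + μ * n))) * ∏ i, P (f i) := by
          simp only [lt_sub_iff_add_lt]
          exact sum_filter_lt_le_sum_exp_mul univ (fun f _ => prod_nonneg fun i _ => hP0 (f i))
            _ _ (by positivity)
      _ = exp (-(t * (μ + ε) * n)) * (∑ y, exp (t * c y) * P y) ^ n := by
          rw [← sum_exp_mul_sum_mul_prod_eq_pow, mul_sum]
          refine sum_congr rfl fun f _ => ?_
          rw [← mul_assoc, ← exp_add]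
          ring_nf
      _ ≤ exp (-(t * (μ + ε) * n)) * exp (μ * (exp t - 1)) ^ n := by
          gcongr
          · exact sum_nonneg fun y _ => mul_nonneg (exp_pos _).le (hP0 y)
          · exact sum_exp_mul_mul_le_exp hP0 hP1 hc0 hc1 t
      _ = exp (n * (μ * (exp t - 1) - t * (μ + ε))) := by
          rw [← exp_nat_mul, ← exp_add]
          ring_nf
      _ ≤ exp (n * -(ε ^ 2 / 3)) := by
          gcongr
          exact chernoff_exponent_le hμ0 hμ1 hε.le hε1
      _ = exp (-(n * ε ^ 2) / 3) := by ring_nf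
  -- `e^t ≤ 1 + t + 3t²/4` needs `t ≤ 1`; for `ε > 1` the tail is empty.
  · refine (sum_eq_zero fun f hf => ?_).trans_le (exp_pos _).le
    have hS : ∑ i, c (f i) ≤ n := (sum_le_sum fun i _ => hc1 (f i)).trans (by simp)
    have hn : (0 : ℝ) ≤ n := n.cast_nonneg
    exact absurd (mem_filter.1 hf).2 (not_lt.2 (by nlinarith))

theorem chernoff_lower_tail_le (hP0 : ∀ x, 0 ≤ P x) (hP1 : ∑ x, P x = 1)
    {c : X → ℝ} (hc0 : ∀ x, 0 ≤ c x) (hc1 : ∀ x, c x ≤ 1) {ε : ℝ} (hε : 0 < ε) :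
    ∑ f : Fin n → X with ε * n < (∑ y, c y * P y) * n - ∑ i, c (f i), ∏ i, P (f i) ≤
      exp (-(n * ε ^ 2) / 3) := by
  have h := chernoff_upper_tail_le hP0 hP1 (c := fun y => 1 - c y)
    (fun y => sub_nonneg.2 (hc1 y)) (fun y => sub_le_self _ (hc0 y)) hε (n := n)
  have hμ : ∑ y, (1 - c y) * P y = 1 - ∑ y, c y * P y := by
    simp [sub_mul, sum_sub_distrib, hP1]
  have hS : ∀ f : Fin n → X, ∑ i, (1 - c (f i)) = n - ∑ i, c (f i) := by
    simp [sum_sub_distrib]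
  simp only [hμ, hS] at h
  convert h using 4
  ring

theorem sum_prod_filter_lt_abs_card_sub_le [DecidableEq X] (hP0 : ∀ x, 0 ≤ P x)
    (hP1 : ∑ x, P x = 1) (x : X) {ε : ℝ} (hε : 0 < ε) :
    ∑ f : Fin n → X with ε * n < |(#{i | f i = x} : ℝ) - P x * n|, ∏ i, P (f i) ≤
      2 * exp (-(n * ε ^ 2) / 3) := by
  have hμ : ∑ y, (if y = x then 1 else 0 : ℝ) * P y = P x := by simp
  have hS : ∀ f : Fin n → X, ∑ i, (if f i = x then 1 else 0 : ℝ) = #{i | f i = x} :=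
    fun f => (natCast_card_filter _ _).symm
  have h0 : ∀ y, (0 : ℝ) ≤ if y = x then 1 else 0 := fun y => by split_ifs <;> norm_num
  have h1 : ∀ y, (if y = x then 1 else 0 : ℝ) ≤ 1 := fun y => by split_ifs <;> norm_num
  have hupper := chernoff_upper_tail_le hP0 hP1 h0 h1 hε (n := n)
  have hlower := chernoff_lower_tail_le hP0 hP1 h0 h1 hε (n := n)
  simp only [hμ, hS] at hupper hlower
  calc _ ≤ _ := sum_filter_lt_abs_le univ (fun f _ => prod_nonneg fun i _ => hP0 (f i)) _ _
    _ ≤ _ := by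
      simp only [neg_sub]
      linarith

end Sequences

open Classical in
theorem typical_sequences {X : Type*} [Fintype X] (n : ℕ) (P : X → ℝ)
    (hP0 : ∀ x, 0 ≤ P x) (hP1 : ∑ x, P x = 1) (ε : ℝ) (hε : 0 < ε) :
    1 - 2 * (Fintype.card X : ℝ) * Real.exp (-(n * ε ^ 2) / 3) ≤
      ∑ f : Fin n → X,
        (if (∀ x : X, |((univ.filter (fun i => f i = x)).card : ℝ) - P x * n| ≤ ε * n
              ∧ (P x = 0 → (univ.filter (fun i => f i = x)).card = 0)) then
          ∏ i, P (f i) else 0) := by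
  have htotal : ∑ f : Fin n → X, ∏ i, P (f i) = 1 := by rw [← Fintype.sum_pow, hP1, one_pow]
  have htails : ∑ x, ∑ f : Fin n → X with ε * n < |(#{i | f i = x} : ℝ) - P x * n|,
      ∏ i, P (f i) ≤ 2 * Fintype.card X * exp (-(n * ε ^ 2) / 3) := by
    calc _ ≤ ∑ _x : X, 2 * exp (-(n * ε ^ 2) / 3) :=
          sum_le_sum fun x _ => sum_prod_filter_lt_abs_card_sub_le hP0 hP1 x hε
      _ = _ := by simp only [sum_const, card_univ, nsmul_eq_mul]; ring
  rw [← sum_filter]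
  exact le_trans (by gcongr) (one_sub_sum_sum_filter_le_sum_filter htotal
    (fun f _ => prod_nonneg fun i _ => hP0 (f i)) fun f _ hf h =>
      (exists_lt_abs_of_not_typical hf h).imp fun x hx => ⟨mem_univ x, hx⟩)
end

section
/- Let W : X → Z be a stochastic matrix (a channel), x^n ∈ X^n a fixed input sequence, and ε > 0. Then the probability that the channel output z^n (each z_i drawn independently according to W_{x_i}) is W-typical conditioned on x^n is at least 1 - 2|X||Z| exp(-nε²/3). -/
open Finset


lemma exp_quad {x : ℝ} (hx : |x| ≤ 2/3) : Real.exp x ≤ 1 + x + (3/4) * x^2 := by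
  have h1 : |x| ≤ 1 := hx.trans (by norm_num)
  have h := Real.exp_bound h1 (n := 3) (by norm_num)
  have hs : ∑ m ∈ Finset.range 3, x ^ m / m.factorial = 1 + x + x^2/2 := by
    simp [Finset.sum_range_succ, Nat.factorial]
  rw [hs] at h
  have h2 := (abs_sub_le_iff.1 h).1
  have h3 : |x|^3 ≤ (2/3) * x^2 := by
    have e1 : |x|^3 = |x| * |x|^2 := by ring
    rw [e1, sq_abs]
    nlinarith [sq_nonneg x, abs_nonneg x]
  have h4 : ((Nat.succ 3 : ℕ) : ℝ)/((Nat.factorial 3 : ℕ) * (3:ℕ)) = 2/9 := by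
    norm_num [Nat.factorial]
  rw [h4] at h2
  nlinarith [sq_nonneg x, abs_nonneg x]

open Classical in
lemma chernoff_tail {X Z : Type*} [Fintype X] [Fintype Z]
    (n : ℕ) (W : X → Z → ℝ) (hW0 : ∀ x z, 0 ≤ W x z) (hW1 : ∀ x, ∑ z, W x z = 1)
    (xs : Fin n → X) (x : X) (z : Z) (ε σ : ℝ) (hε : 0 < ε) (hε1 : ε ≤ 1)
    (hσ : σ = 1 ∨ σ = -1) :
    ∑ zs : Fin n → Z,
      (if ε * n < σ * (((univ.filter (fun i => xs i = x ∧ zs i = z)).card : ℝ)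
          - W x z * ((univ.filter (fun i => xs i = x)).card : ℝ)) then
        ∏ i, W (xs i) (zs i) else 0) ≤ Real.exp (-(n * ε ^ 2) / 3) := by
  have hσ2 : σ^2 = 1 := by rcases hσ with h | h <;> simp [h]
  set p := W x z with hp
  set m := ((univ.filter (fun i : Fin n => xs i = x)).card : ℝ) with hm
  set s := σ * (2 * ε / 3) with hs
  have hs2 : s^2 = 4 * ε^2 / 9 := by rw [hs, mul_pow, hσ2]; ring
  have habs : |s| ≤ 2/3 := by
    rcases hσ with h | h <;> rw [hs, h]
    · rw [one_mul, abs_of_nonneg (by positivity)]; linarith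
    · rw [neg_one_mul, abs_neg, abs_of_nonneg (by positivity)]; linarith
  have hp0 : 0 ≤ p := hW0 x z
  have hp1 : p ≤ 1 := by
    have := Finset.single_le_sum (f := W x) (fun z' _ => hW0 x z') (mem_univ z)
    rwa [hW1 x] at this
  have hm0 : 0 ≤ m := by rw [hm]; positivity
  have hmn : m ≤ n := by
    rw [hm]
    have h := Finset.card_filter_le (univ : Finset (Fin n)) (fun i => xs i = x)
    have h2 : ((univ.filter (fun i : Fin n => xs i = x)).card : ℝ)
        ≤ ((univ : Finset (Fin n)).card : ℝ) := by exact_mod_cast h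
    simpa using h2
  have hN : ∀ zs : Fin n → Z, ((univ.filter (fun i => xs i = x ∧ zs i = z)).card : ℝ)
      = ∑ i, (if xs i = x ∧ zs i = z then (1:ℝ) else 0) := by
    intro zs
    rw [Finset.card_filter]
    push_cast
    rfl
  have hmsum : m = ∑ i, (if xs i = x then (1:ℝ) else 0) := by
    rw [hm, Finset.card_filter]; push_cast; rfl
  -- pointwise Markov step
  have step1 : ∀ zs : Fin n → Z,
      (if ε * n < σ * (((univ.filter (fun i => xs i = x ∧ zs i = z)).card : ℝ) - p * m) then
        ∏ i, W (xs i) (zs i) else 0)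
      ≤ (∏ i, W (xs i) (zs i) * Real.exp (s * (if xs i = x ∧ zs i = z then (1:ℝ) else 0)))
        * Real.exp (-(s * (p * m)) - (2 * ε / 3) * (ε * n)) := by
    intro zs
    have hfact : (∏ i, W (xs i) (zs i) * Real.exp (s * (if xs i = x ∧ zs i = z then (1:ℝ) else 0)))
        * Real.exp (-(s * (p * m)) - (2 * ε / 3) * (ε * n))
        = (∏ i, W (xs i) (zs i)) *
          Real.exp (s * (((univ.filter (fun i => xs i = x ∧ zs i = z)).card : ℝ) - p * m)
            - (2 * ε / 3) * (ε * n)) := by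
      rw [Finset.prod_mul_distrib, ← Real.exp_sum, ← Finset.mul_sum, ← hN zs, mul_assoc,
        ← Real.exp_add]
      congr 1
      ring
    rw [hfact]
    split_ifs with h
    · have harg : 0 ≤ s * (((univ.filter (fun i => xs i = x ∧ zs i = z)).card : ℝ) - p * m)
          - (2 * ε / 3) * (ε * n) := by
        have e1 : s * (((univ.filter (fun i => xs i = x ∧ zs i = z)).card : ℝ) - p * m)
            = (2 * ε / 3) * (σ * (((univ.filter (fun i => xs i = x ∧ zs i = z)).card : ℝ) - p * m)) := by
          rw [hs]; ring
        rw [e1]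
        have h23 : 0 < 2 * ε / 3 := by linarith
        nlinarith [h]
      have hexp := Real.one_le_exp harg
      have hprod : 0 ≤ ∏ i, W (xs i) (zs i) :=
        Finset.prod_nonneg fun i _ => hW0 (xs i) (zs i)
      nlinarith [hexp, hprod]
    · exact mul_nonneg (Finset.prod_nonneg fun i _ => hW0 _ _) (Real.exp_pos _).le
  calc ∑ zs : Fin n → Z,
      (if ε * n < σ * (((univ.filter (fun i => xs i = x ∧ zs i = z)).card : ℝ) - p * m) then
        ∏ i, W (xs i) (zs i) else 0)
      ≤ ∑ zs : Fin n → Z,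
        (∏ i, W (xs i) (zs i) * Real.exp (s * (if xs i = x ∧ zs i = z then (1:ℝ) else 0)))
          * Real.exp (-(s * (p * m)) - (2 * ε / 3) * (ε * n)) :=
        Finset.sum_le_sum fun zs _ => step1 zs
    _ = (∏ i, ∑ z' : Z, W (xs i) z' * Real.exp (s * (if xs i = x ∧ z' = z then (1:ℝ) else 0)))
          * Real.exp (-(s * (p * m)) - (2 * ε / 3) * (ε * n)) := by
        rw [← Finset.sum_mul, Fintype.prod_sum]
    _ ≤ Real.exp (m * (p * (Real.exp s - 1)))
          * Real.exp (-(s * (p * m)) - (2 * ε / 3) * (ε * n)) := by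
        have site : ∀ i : Fin n,
            ∑ z' : Z, W (xs i) z' * Real.exp (s * (if xs i = x ∧ z' = z then (1:ℝ) else 0))
            ≤ Real.exp ((if xs i = x then (1:ℝ) else 0) * (p * (Real.exp s - 1))) := by
          intro i
          by_cases hi : xs i = x
          · rw [if_pos hi, one_mul]
            have hsum : ∑ z' : Z, W x z' * Real.exp (s * (if z' = z then (1:ℝ) else 0))
                = p * Real.exp s + (1 - p) := by
              rw [← Finset.add_sum_erase _ _ (Finset.mem_univ z)]
              have h2 : ∑ z' ∈ univ.erase z, W x z' * Real.exp (s * (if z' = z then (1:ℝ) else 0))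
                  = ∑ z' ∈ univ.erase z, W x z' := by
                apply Finset.sum_congr rfl
                intro z' hz'
                rw [if_neg (Finset.ne_of_mem_erase hz'), mul_zero, Real.exp_zero, mul_one]
              have h3 : ∑ z' ∈ univ.erase z, W x z' = 1 - p := by
                have h4 := Finset.add_sum_erase univ (W x) (Finset.mem_univ z)
                rw [hW1 x] at h4
                linarith
              rw [h2, h3, if_pos rfl, mul_one]
            have e3 : ∑ z' : Z, W (xs i) z' * Real.exp (s * (if xs i = x ∧ z' = z then (1:ℝ) else 0))
                = ∑ z' : Z, W x z' * Real.exp (s * (if z' = z then (1:ℝ) else 0)) := by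
              apply Finset.sum_congr rfl
              intro z' _
              have e4 : (if xs i = x ∧ z' = z then (1:ℝ) else 0)
                  = (if z' = z then (1:ℝ) else 0) := by
                by_cases h : z' = z
                · rw [if_pos ⟨hi, h⟩, if_pos h]
                · rw [if_neg (fun hc => h hc.2), if_neg h]
              rw [e4, hi]
            rw [e3, hsum]
            have h5 : p * Real.exp s + (1 - p) = p * (Real.exp s - 1) + 1 := by ring
            rw [h5]
            exact Real.add_one_le_exp _
          · have e2 : ∀ z' : Z, (if xs i = x ∧ z' = z then (1:ℝ) else 0) = 0 := by
              intro z'; simp [hi]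
            simp only [e2, mul_zero, Real.exp_zero, mul_one, if_neg hi, zero_mul]
            rw [hW1 (xs i)]
        have hub : (∏ i, ∑ z' : Z, W (xs i) z' * Real.exp (s * (if xs i = x ∧ z' = z then (1:ℝ) else 0)))
            ≤ Real.exp (m * (p * (Real.exp s - 1))) := by
          calc (∏ i, ∑ z' : Z, W (xs i) z' * Real.exp (s * (if xs i = x ∧ z' = z then (1:ℝ) else 0)))
              ≤ ∏ i, Real.exp ((if xs i = x then (1:ℝ) else 0) * (p * (Real.exp s - 1))) := by
                apply Finset.prod_le_prod
                · intro i _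
                  exact Finset.sum_nonneg fun z' _ => mul_nonneg (hW0 _ _) (Real.exp_pos _).le
                · intro i _
                  exact site i
            _ = Real.exp (∑ i, (if xs i = x then (1:ℝ) else 0) * (p * (Real.exp s - 1))) :=
                (Real.exp_sum _ _).symm
            _ = Real.exp (m * (p * (Real.exp s - 1))) := by
                rw [← Finset.sum_mul, ← hmsum]
        exact mul_le_mul_of_nonneg_right hub (Real.exp_pos _).le
    _ ≤ Real.exp (-(n * ε ^ 2) / 3) := by
        rw [← Real.exp_add]
        apply Real.exp_le_exp.mpr
        have hq := exp_quad habs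
        have hlow := Real.add_one_le_exp s
        have hB1 : Real.exp s - 1 - s ≤ ε^2 / 3 := by nlinarith [hq, hs2]
        have hB0 : 0 ≤ Real.exp s - 1 - s := by linarith
        have hpmn : p * m ≤ (n : ℝ) := by nlinarith
        have hpm0 : 0 ≤ p * m := mul_nonneg hp0 hm0
        have key : p * m * (Real.exp s - 1 - s) ≤ (n : ℝ) * (ε^2 / 3) :=
          mul_le_mul hpmn hB1 hB0 (Nat.cast_nonneg n)
        nlinarith [key]

/- Conditionally typical sequences: for a channel `W : X → Z` and a fixed input
sequence `x^n`, the output sequence (drawn independently, `z_i ∼ W_{x_i}`) is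
`W`-typical conditioned on `x^n` with probability at least
`1 - 2|X||Z| exp(-nε²/3)`. -/
open Classical in
theorem conditionally_typical_sequences {X Z : Type*} [Fintype X] [Fintype Z]
    (n : ℕ) (W : X → Z → ℝ) (hW0 : ∀ x z, 0 ≤ W x z) (hW1 : ∀ x, ∑ z, W x z = 1)
    (xs : Fin n → X) (ε : ℝ) (hε : 0 < ε) :
    1 - 2 * (Fintype.card X : ℝ) * (Fintype.card Z : ℝ) * Real.exp (-(n * ε ^ 2) / 3) ≤
      ∑ zs : Fin n → Z,
        (if (∀ (x : X) (z : Z),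
              |((univ.filter (fun i => xs i = x ∧ zs i = z)).card : ℝ)
                  - W x z * ((univ.filter (fun i => xs i = x)).card : ℝ)| ≤ ε * n
              ∧ (W x z = 0 → (univ.filter (fun i => xs i = x ∧ zs i = z)).card = 0)) then
          ∏ i, W (xs i) (zs i) else 0) := by
  have hμ0 : ∀ zs : Fin n → Z, 0 ≤ ∏ i, W (xs i) (zs i) :=
    fun zs => Finset.prod_nonneg fun i _ => hW0 _ _
  have total : ∑ zs : Fin n → Z, ∏ i, W (xs i) (zs i) = 1 := by
    rw [← Fintype.prod_sum]
    exact Finset.prod_eq_one fun i _ => hW1 (xs i)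
  set Q : (Fin n → Z) → Prop := fun zs => ∀ (x : X) (z : Z),
    |((univ.filter (fun i => xs i = x ∧ zs i = z)).card : ℝ)
      - W x z * ((univ.filter (fun i => xs i = x)).card : ℝ)| ≤ ε * n with hQdef
  -- the full condition is implied by Q on the support
  have PQ : ∑ zs : Fin n → Z, (if Q zs then ∏ i, W (xs i) (zs i) else 0)
      ≤ ∑ zs : Fin n → Z,
        (if (∀ (x : X) (z : Z),
              |((univ.filter (fun i => xs i = x ∧ zs i = z)).card : ℝ)
                  - W x z * ((univ.filter (fun i => xs i = x)).card : ℝ)| ≤ ε * n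
              ∧ (W x z = 0 → (univ.filter (fun i => xs i = x ∧ zs i = z)).card = 0)) then
          ∏ i, W (xs i) (zs i) else 0) := by
    apply Finset.sum_le_sum
    intro zs _
    by_cases hq : Q zs
    · rcases eq_or_ne (∏ i, W (xs i) (zs i)) 0 with h0 | h0
      · split_ifs <;> simp [h0]
      · have hP : ∀ (x : X) (z : Z),
            |((univ.filter (fun i => xs i = x ∧ zs i = z)).card : ℝ)
                - W x z * ((univ.filter (fun i => xs i = x)).card : ℝ)| ≤ ε * n
            ∧ (W x z = 0 → (univ.filter (fun i => xs i = x ∧ zs i = z)).card = 0) := by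
          intro x z
          refine ⟨hq x z, fun hWz => ?_⟩
          rw [Finset.card_eq_zero, Finset.filter_eq_empty_iff]
          intro i _
          rintro ⟨h1, h2⟩
          exact h0 (Finset.prod_eq_zero (Finset.mem_univ i) (by rw [h1, h2]; exact hWz))
        rw [if_pos hq, if_pos hP]
    · rw [if_neg hq]
      split_ifs
      · exact hμ0 zs
      · exact le_rfl
  have hsplit : ∑ zs : Fin n → Z, (if Q zs then ∏ i, W (xs i) (zs i) else 0)
      = 1 - ∑ zs : Fin n → Z, (if ¬ Q zs then ∏ i, W (xs i) (zs i) else 0) := by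
    have h1 : ∀ zs : Fin n → Z, (if Q zs then ∏ i, W (xs i) (zs i) else 0)
        = (∏ i, W (xs i) (zs i)) - (if ¬ Q zs then ∏ i, W (xs i) (zs i) else 0) := by
      intro zs
      by_cases h : Q zs
      · rw [if_pos h, if_neg (not_not_intro h)]; ring
      · rw [if_neg h, if_pos h]; ring
    rw [Finset.sum_congr rfl fun zs _ => h1 zs, Finset.sum_sub_distrib, total]
  have hexp_pos : (0:ℝ) < Real.exp (-(n * ε ^ 2) / 3) := Real.exp_pos _
  by_cases hε1 : ε ≤ 1
  · -- main case: Chernoff + union bound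
    have pt : ∀ zs : Fin n → Z, (if ¬ Q zs then ∏ i, W (xs i) (zs i) else 0)
        ≤ ∑ q : X × Z,
          ((if ε * n < 1 * (((univ.filter (fun i => xs i = q.1 ∧ zs i = q.2)).card : ℝ)
              - W q.1 q.2 * ((univ.filter (fun i => xs i = q.1)).card : ℝ)) then
            ∏ i, W (xs i) (zs i) else 0)
          + (if ε * n < (-1) * (((univ.filter (fun i => xs i = q.1 ∧ zs i = q.2)).card : ℝ)
              - W q.1 q.2 * ((univ.filter (fun i => xs i = q.1)).card : ℝ)) then
            ∏ i, W (xs i) (zs i) else 0)) := by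
      intro zs
      have hterm : ∀ q : X × Z, (0:ℝ) ≤
          (if ε * n < 1 * (((univ.filter (fun i => xs i = q.1 ∧ zs i = q.2)).card : ℝ)
              - W q.1 q.2 * ((univ.filter (fun i => xs i = q.1)).card : ℝ)) then
            ∏ i, W (xs i) (zs i) else 0)
          + (if ε * n < (-1) * (((univ.filter (fun i => xs i = q.1 ∧ zs i = q.2)).card : ℝ)
              - W q.1 q.2 * ((univ.filter (fun i => xs i = q.1)).card : ℝ)) then
            ∏ i, W (xs i) (zs i) else 0) := by
        intro q
        have := hμ0 zs
        have a1 : (0:ℝ) ≤ (if ε * n < 1 * (((univ.filter (fun i => xs i = q.1 ∧ zs i = q.2)).card : ℝ)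
              - W q.1 q.2 * ((univ.filter (fun i => xs i = q.1)).card : ℝ)) then
            ∏ i, W (xs i) (zs i) else 0) := by split_ifs <;> [exact this; exact le_rfl]
        have a2 : (0:ℝ) ≤ (if ε * n < (-1) * (((univ.filter (fun i => xs i = q.1 ∧ zs i = q.2)).card : ℝ)
              - W q.1 q.2 * ((univ.filter (fun i => xs i = q.1)).card : ℝ)) then
            ∏ i, W (xs i) (zs i) else 0) := by split_ifs <;> [exact this; exact le_rfl]
        linarith
      by_cases h : Q zs
      · rw [if_neg (not_not_intro h)]
        exact Finset.sum_nonneg fun q _ => hterm q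
      · rw [if_pos h]
        have h' : ∃ (x : X) (z : Z), ¬ (|((univ.filter (fun i => xs i = x ∧ zs i = z)).card : ℝ)
            - W x z * ((univ.filter (fun i => xs i = x)).card : ℝ)| ≤ ε * n) := by
          by_contra hc
          push_neg at hc
          exact h fun x z => hc x z
        obtain ⟨x, z, hxz⟩ := h'
        have habs : ε * n < |((univ.filter (fun i => xs i = x ∧ zs i = z)).card : ℝ)
            - W x z * ((univ.filter (fun i => xs i = x)).card : ℝ)| := not_le.mp hxz
        refine le_trans ?_ (Finset.single_le_sum (fun q _ => hterm q) (Finset.mem_univ (x, z)))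
        dsimp only
        set d := ((univ.filter (fun i => xs i = x ∧ zs i = z)).card : ℝ)
            - W x z * ((univ.filter (fun i => xs i = x)).card : ℝ) with hd
        rcases abs_cases d with ⟨he, _⟩ | ⟨he, _⟩
        · rw [he] at habs
          have c1 : ε * (n:ℝ) < 1 * d := by rw [one_mul]; exact habs
          rw [if_pos c1]
          have a2 : (0:ℝ) ≤ (if ε * (n:ℝ) < -1 * d then ∏ i, W (xs i) (zs i) else 0) := by
            split_ifs <;> [exact hμ0 zs; exact le_rfl]
          linarith
        · rw [he] at habs
          have c2 : ε * (n:ℝ) < -1 * d := by rw [neg_one_mul]; exact habs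
          rw [if_pos c2]
          have a1 : (0:ℝ) ≤ (if ε * (n:ℝ) < 1 * d then ∏ i, W (xs i) (zs i) else 0) := by
            split_ifs <;> [exact hμ0 zs; exact le_rfl]
          linarith
    have bound : ∑ zs : Fin n → Z, (if ¬ Q zs then ∏ i, W (xs i) (zs i) else 0)
        ≤ (Fintype.card X : ℝ) * (Fintype.card Z : ℝ) * (2 * Real.exp (-(n * ε ^ 2) / 3)) := by
      calc ∑ zs : Fin n → Z, (if ¬ Q zs then ∏ i, W (xs i) (zs i) else 0)
          ≤ ∑ zs : Fin n → Z, ∑ q : X × Z,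
            ((if ε * n < 1 * (((univ.filter (fun i => xs i = q.1 ∧ zs i = q.2)).card : ℝ)
                - W q.1 q.2 * ((univ.filter (fun i => xs i = q.1)).card : ℝ)) then
              ∏ i, W (xs i) (zs i) else 0)
            + (if ε * n < (-1) * (((univ.filter (fun i => xs i = q.1 ∧ zs i = q.2)).card : ℝ)
                - W q.1 q.2 * ((univ.filter (fun i => xs i = q.1)).card : ℝ)) then
              ∏ i, W (xs i) (zs i) else 0)) := Finset.sum_le_sum fun zs _ => pt zs
        _ = ∑ q : X × Z, ∑ zs : Fin n → Z,
            ((if ε * n < 1 * (((univ.filter (fun i => xs i = q.1 ∧ zs i = q.2)).card : ℝ)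
                - W q.1 q.2 * ((univ.filter (fun i => xs i = q.1)).card : ℝ)) then
              ∏ i, W (xs i) (zs i) else 0)
            + (if ε * n < (-1) * (((univ.filter (fun i => xs i = q.1 ∧ zs i = q.2)).card : ℝ)
                - W q.1 q.2 * ((univ.filter (fun i => xs i = q.1)).card : ℝ)) then
              ∏ i, W (xs i) (zs i) else 0)) := Finset.sum_comm
        _ ≤ ∑ _q : X × Z, (2 * Real.exp (-(n * ε ^ 2) / 3)) := by
            apply Finset.sum_le_sum
            rintro ⟨x, z⟩ _
            dsimp only
            rw [Finset.sum_add_distrib]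
            have h1 := chernoff_tail n W hW0 hW1 xs x z ε 1 hε hε1 (Or.inl rfl)
            have h2 := chernoff_tail n W hW0 hW1 xs x z ε (-1) hε hε1 (Or.inr rfl)
            linarith
        _ = (Fintype.card X : ℝ) * (Fintype.card Z : ℝ) * (2 * Real.exp (-(n * ε ^ 2) / 3)) := by
            rw [Finset.sum_const, Finset.card_univ, Fintype.card_prod]
            simp [mul_comm, mul_assoc, mul_left_comm]
    have := PQ
    rw [hsplit] at this
    linarith
  · -- trivial case: ε > 1, the numeric condition always holds
    push_neg at hε1
    have hQall : ∀ zs : Fin n → Z, Q zs := by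
      intro zs x z
      have hNm : ((univ.filter (fun i : Fin n => xs i = x ∧ zs i = z)).card : ℝ)
          ≤ ((univ.filter (fun i : Fin n => xs i = x)).card : ℝ) := by
        have hsub : (univ.filter (fun i : Fin n => xs i = x ∧ zs i = z))
            ⊆ univ.filter (fun i : Fin n => xs i = x) := by
          intro i hi
          rw [Finset.mem_filter] at hi ⊢
          exact ⟨hi.1, hi.2.1⟩
        exact_mod_cast Finset.card_le_card hsub
      have hN0 : (0:ℝ) ≤ ((univ.filter (fun i : Fin n => xs i = x ∧ zs i = z)).card : ℝ) := by
        positivity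
      have hmn : ((univ.filter (fun i : Fin n => xs i = x)).card : ℝ) ≤ n := by
        have h := Finset.card_filter_le (univ : Finset (Fin n)) (fun i => xs i = x)
        have h2 : ((univ.filter (fun i : Fin n => xs i = x)).card : ℝ)
            ≤ ((univ : Finset (Fin n)).card : ℝ) := by exact_mod_cast h
        simpa using h2
      have hm0 : (0:ℝ) ≤ ((univ.filter (fun i : Fin n => xs i = x)).card : ℝ) := by positivity
      have hp0 : 0 ≤ W x z := hW0 x z
      have hp1 : W x z ≤ 1 := by
        have := Finset.single_le_sum (f := W x) (fun z' _ => hW0 x z') (mem_univ z)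
        rwa [hW1 x] at this
      rw [abs_le]
      constructor <;> nlinarith
    have hone : ∑ zs : Fin n → Z, (if Q zs then ∏ i, W (xs i) (zs i) else 0) = 1 := by
      rw [Finset.sum_congr rfl fun zs _ => if_pos (hQall zs)]
      exact total
    have hcards : (0:ℝ) ≤ 2 * (Fintype.card X : ℝ) * (Fintype.card Z : ℝ)
        * Real.exp (-(n * ε ^ 2) / 3) := by positivity
    linarith [PQ, hone.symm ▸ PQ]
end

section
/- Let W : X → Z be a stochastic matrix and a ∈ X such that for every probability distribution P on X with P(a) = 0, the total variation quantity ‖W_a − ∑_x P(x)W_x‖₁ ≥ δ. Let x^n, x̃^n ∈ X^n with Hamming distance d_H(x^{I_a}, x̃^{I_a}) ≥ κn on the index set I_a := {k : x̃_k = a}, and suppose |I_a| ≥ λn. Then the probability, when outputs are generated independently with z_k ∼ W_{x_k}, that z^n lies in the W-typical set T^n_{W,ε}(x̃^n) with ε := λδκ/(2|Z|), is at most 2·exp(-nε²/3). -/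
open Finset

/-! If the claimed inputs `x̃` put `a` on `I_a` while the true inputs differ from `a` on a set `J`
of at least `κn` positions, then the empirical distribution of the true inputs on `J` avoids `a`,
so by the separation hypothesis the expected output counts `∑_{k ∈ I_a} W_{x_k}` differ from
the counts `|I_a| W_a` that typicality for `x̃` demands by at least `δκn` in `ℓ₁`, hence by
`δκn/|Z| ≥ 2εn` at some output letter `z`. On the typical set the count of `(a, z)` is within
`εn` of `|I_a| W_a(z)`, so it is at least `εn` away from its mean; a Chernoff bound for this sum
of independent centred indicators gives the probability bound. -/

lemma Real.exp_le_one_add_add_sq {x : ℝ} (hx : |x| ≤ 1) : Real.exp x ≤ 1 + x + 3 / 4 * x ^ 2 := by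
  have h := Real.exp_bound hx (n := 2) (by norm_num)
  norm_num [sum_range_succ, Nat.factorial] at h
  linarith [(abs_le.1 h).2]

section Chernoff

variable {ι Z : Type*} [Fintype ι] [DecidableEq ι] [Fintype Z]

/-- The probability of `E` when the coordinates `zs i` are drawn independently from `p i`. -/
noncomputable def piMass (p : ι → Z → ℝ) (E : Set (ι → Z)) : ℝ :=
  ∑ zs, E.indicator (fun zs => ∏ i, p i (zs i)) zs

variable {p : ι → Z → ℝ}

lemma piMass_mono (hp0 : ∀ i z, 0 ≤ p i z) {E F : Set (ι → Z)} (h : E ⊆ F) :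
    piMass p E ≤ piMass p F :=
  sum_le_sum fun zs _ =>
    Set.indicator_le_indicator_of_subset h (fun zs => prod_nonneg fun i _ => hp0 i (zs i)) zs

lemma piMass_union_le (hp0 : ∀ i z, 0 ≤ p i z) (E F : Set (ι → Z)) :
    piMass p (E ∪ F) ≤ piMass p E + piMass p F := by
  classical
  rw [piMass, piMass, piMass, ← sum_add_distrib]
  refine sum_le_sum fun zs _ => ?_
  have hprod : 0 ≤ ∏ i, p i (zs i) := prod_nonneg fun i _ => hp0 i (zs i)
  simp only [Set.indicator_apply, Set.mem_union]
  split_ifs <;> grind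

lemma piMass_le_exp_mul_sum (hp0 : ∀ i z, 0 ≤ p i z) (S : (ι → Z) → ℝ) (s : ℝ) {t : ℝ}
    (ht : 0 ≤ t) :
    piMass p {zs | s ≤ S zs} ≤
      Real.exp (-(t * s)) * ∑ zs, (∏ i, p i (zs i)) * Real.exp (t * S zs) := by
  rw [piMass, mul_sum]
  refine sum_le_sum fun zs _ => ?_
  have hprod : 0 ≤ ∏ i, p i (zs i) := prod_nonneg fun i _ => hp0 i (zs i)
  rw [Set.indicator_apply, mul_left_comm, ← Real.exp_add]
  split_ifs with hs
  · replace hs : s ≤ S zs := hs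
    exact le_mul_of_one_le_right hprod (Real.one_le_exp (by nlinarith))
  · positivity

lemma sum_mul_exp_mul_le {q g : Z → ℝ} (hq0 : ∀ z, 0 ≤ q z) (hq1 : ∑ z, q z = 1)
    (hg : ∀ z, |g z| ≤ 1) (hmean : ∑ z, q z * g z = 0) {t : ℝ} (ht : |t| ≤ 1) :
    ∑ z, q z * Real.exp (t * g z) ≤ Real.exp (3 / 4 * t ^ 2) := by
  have hpoint : ∀ z, Real.exp (t * g z) ≤ (1 + 3 / 4 * t ^ 2) + t * g z := fun z => by
    have htg : |t * g z| ≤ 1 := by rw [abs_mul]; exact mul_le_one₀ ht (abs_nonneg _) (hg z)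
    have hg2 : g z ^ 2 ≤ 1 := by rw [← sq_abs]; exact pow_le_one₀ (abs_nonneg _) (hg z)
    nlinarith [Real.exp_le_one_add_add_sq htg, sq_nonneg t]
  calc ∑ z, q z * Real.exp (t * g z)
      ≤ ∑ z, q z * ((1 + 3 / 4 * t ^ 2) + t * g z) :=
        sum_le_sum fun z _ => mul_le_mul_of_nonneg_left (hpoint z) (hq0 z)
    _ = 1 + 3 / 4 * t ^ 2 := by
        simp only [mul_add, sum_add_distrib, ← sum_mul, hq1, mul_left_comm _ t, ← mul_sum,
          hmean]
        ring
    _ ≤ Real.exp (3 / 4 * t ^ 2) := by linarith [Real.add_one_le_exp (3 / 4 * t ^ 2)]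

lemma sum_prod_mul_exp_sum_le (hp0 : ∀ i z, 0 ≤ p i z) (hp1 : ∀ i, ∑ z, p i z = 1)
    {f : ι → Z → ℝ} (hf : ∀ i z, |f i z| ≤ 1) (hmean : ∀ i, ∑ z, p i z * f i z = 0)
    {t : ℝ} (ht : |t| ≤ 1) :
    ∑ zs : ι → Z, (∏ i, p i (zs i)) * Real.exp (t * ∑ i, f i (zs i)) ≤
      Real.exp (3 / 4 * Fintype.card ι * t ^ 2) := by
  simp_rw [mul_sum, Real.exp_sum, ← prod_mul_distrib]
  rw [← Fintype.prod_sum (fun i z => p i z * Real.exp (t * f i z))]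
  calc ∏ i, ∑ z, p i z * Real.exp (t * f i z)
      ≤ ∏ _i : ι, Real.exp (3 / 4 * t ^ 2) :=
        prod_le_prod (fun i _ => sum_nonneg fun z _ => mul_nonneg (hp0 i z) (Real.exp_pos _).le)
          fun i _ => sum_mul_exp_mul_le (hp0 i) (hp1 i) (hf i) (hmean i) ht
    _ = Real.exp (3 / 4 * Fintype.card ι * t ^ 2) := by
        rw [prod_const, card_univ, ← Real.exp_nat_mul]
        ring_nf

lemma piMass_sum_ge_le (hp0 : ∀ i z, 0 ≤ p i z) (hp1 : ∀ i, ∑ z, p i z = 1)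
    {f : ι → Z → ℝ} (hf : ∀ i z, |f i z| ≤ 1) (hmean : ∀ i, ∑ z, p i z * f i z = 0)
    (s : ℝ) {t : ℝ} (ht0 : 0 ≤ t) (ht1 : t ≤ 1) :
    piMass p {zs | s ≤ ∑ i, f i (zs i)} ≤
      Real.exp (-(t * s) + 3 / 4 * Fintype.card ι * t ^ 2) := by
  rw [Real.exp_add]
  refine (piMass_le_exp_mul_sum hp0 _ s ht0).trans ?_
  exact mul_le_mul_of_nonneg_left
    (sum_prod_mul_exp_sum_le hp0 hp1 hf hmean (abs_le.2 ⟨by linarith, ht1⟩)) (Real.exp_pos _).le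

theorem piMass_abs_sum_ge_le (hp0 : ∀ i z, 0 ≤ p i z) (hp1 : ∀ i, ∑ z, p i z = 1)
    {f : ι → Z → ℝ} (hf : ∀ i z, |f i z| ≤ 1) (hmean : ∀ i, ∑ z, p i z * f i z = 0)
    {ε : ℝ} (hε : 0 ≤ ε) :
    piMass p {zs | ε * Fintype.card ι ≤ |∑ i, f i (zs i)|} ≤
      2 * Real.exp (-(Fintype.card ι * ε ^ 2) / 3) := by
  set N : ℝ := (Fintype.card ι : ℝ)
  have bound_of_exponent_le : ∀ t, 0 ≤ t → t ≤ 1 →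
      -(t * (ε * N)) + 3 / 4 * N * t ^ 2 ≤ -(N * ε ^ 2) / 3 →
      piMass p {zs | ε * N ≤ |∑ i, f i (zs i)|} ≤ 2 * Real.exp (-(N * ε ^ 2) / 3) := by
    intro t ht0 ht1 hexp
    have hsplit : {zs : ι → Z | ε * N ≤ |∑ i, f i (zs i)|} ⊆
        {zs | ε * N ≤ ∑ i, f i (zs i)} ∪ {zs | ε * N ≤ ∑ i, -f i (zs i)} := fun zs hzs => by
      simpa only [Set.mem_union, Set.mem_ofPred_eq, sum_neg_distrib] using le_abs.1 hzs
    refine (piMass_mono hp0 hsplit).trans <| (piMass_union_le hp0 _ _).trans ?_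
    rw [two_mul]
    refine add_le_add
      ((piMass_sum_ge_le hp0 hp1 hf hmean _ ht0 ht1).trans (Real.exp_le_exp.2 hexp))
      ((piMass_sum_ge_le hp0 hp1 (f := fun i z => -f i z) (fun i z => by simpa using hf i z)
        (fun i => by simp [hmean i]) _ ht0 ht1).trans (Real.exp_le_exp.2 hexp))
  -- `t = 2ε/3` minimises the exponent `-tεN + 3/4 N t²`.
  by_cases hε1 : ε ≤ 3 / 2
  · exact bound_of_exponent_le (2 * ε / 3) (by positivity) (by linarith) (le_of_eq (by ring))
  rcases (show (0 : ℝ) ≤ N by positivity).eq_or_lt with hN0 | hNpos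
  · exact bound_of_exponent_le 0 le_rfl zero_le_one (by simp [← hN0])
  have hempty : {zs : ι → Z | ε * N ≤ |∑ i, f i (zs i)|} = ∅ := by
    refine Set.eq_empty_of_forall_notMem fun zs hzs => ?_
    have hbound : |∑ i, f i (zs i)| ≤ N := by
      refine (abs_sum_le_sum_abs _ _).trans ?_
      simpa using sum_le_sum fun i (_ : i ∈ univ) => hf i (zs i)
    have : ε * N ≤ N := le_trans hzs hbound
    nlinarith
  rw [hempty]
  simp only [piMass, Set.indicator_empty, sum_const_zero]
  positivity

theorem piMass_abs_card_sub_sum_ge_le [DecidableEq Z] (hp0 : ∀ i z, 0 ≤ p i z)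
    (hp1 : ∀ i, ∑ z, p i z = 1)
    (s : Finset ι) (z : Z) {ε : ℝ} (hε : 0 ≤ ε) :
    piMass p {zs | ε * Fintype.card ι ≤ |#{i ∈ s | zs i = z} - ∑ i ∈ s, p i z|} ≤
      2 * Real.exp (-(Fintype.card ι * ε ^ 2) / 3) := by
  let f : ι → Z → ℝ := fun i y => if i ∈ s then (if y = z then 1 else 0) - p i z else 0
  have hf : ∀ i y, |f i y| ≤ 1 := fun i y => by
    have hpz0 := hp0 i z
    have hpz1 : p i z ≤ 1 := hp1 i ▸ single_le_sum (fun y _ => hp0 i y) (mem_univ z)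
    simp only [f]
    split_ifs <;> rw [abs_le] <;> constructor <;> linarith
  have hmean : ∀ i, ∑ y, p i y * f i y = 0 := fun i => by
    simp only [f]
    split_ifs
    · simp [mul_sub, sum_sub_distrib, ← sum_mul, hp1]
    · simp
  have hsum : ∀ zs : ι → Z, ∑ i, f i (zs i) = #{i ∈ s | zs i = z} - ∑ i ∈ s, p i z := fun zs => by
    rw [← sum_boole, ← sum_sub_distrib]
    exact Fintype.sum_ite_mem s _
  simpa only [hsum] using piMass_abs_sum_ge_le hp0 hp1 hf hmean hε

end Chernoff

section Separation

variable {X Z ι : Type*} [Fintype X] [Fintype Z] {W : X → Z → ℝ} {a : X} {δ : ℝ}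

lemma le_sum_abs_sum_sub_of_separated
    (hsep : ∀ P : X → ℝ, (∀ x, 0 ≤ P x) → ∑ x, P x = 1 → P a = 0 →
      δ ≤ ∑ z, |W a z - ∑ x, P x * W x z|)
    (J : Finset ι) (y : ι → X) (hy : ∀ k ∈ J, y k ≠ a) :
    δ * #J ≤ ∑ z, |∑ k ∈ J, (W (y k) z - W a z)| := by
  classical
  rcases J.eq_empty_or_nonempty with rfl | hJ
  · simp
  have hJpos : (0 : ℝ) < #J := by exact_mod_cast hJ.card_pos
  -- `P` is the empirical distribution of `y` on `J`.
  set P : X → ℝ := fun x => #{k ∈ J | y k = x} / #J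
  have hmix : ∀ g : X → ℝ, ∑ x, P x * g x = (∑ k ∈ J, g (y k)) / #J := fun g => by
    simp_rw [P, div_mul_eq_mul_div, ← sum_div, ← sum_fiberwise' J y g, sum_const, nsmul_eq_mul]
  have hP1 : ∑ x, P x = 1 := by
    simpa [hJpos.ne'] using hmix 1
  have hPa : P a = 0 := by
    simp only [P, div_eq_zero_iff, Nat.cast_eq_zero, card_eq_zero, filter_eq_empty_iff]
    exact Or.inl hy
  calc δ * #J ≤ (∑ z, |W a z - ∑ x, P x * W x z|) * #J :=
        mul_le_mul_of_nonneg_right (hsep P (fun x => by positivity) hP1 hPa) hJpos.le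
    _ = ∑ z, |∑ k ∈ J, (W (y k) z - W a z)| := by
        rw [sum_mul]
        refine sum_congr rfl fun z _ => ?_
        rw [hmix, ← abs_of_pos hJpos, ← abs_mul, abs_of_pos hJpos, sum_sub_distrib, sum_const,
          nsmul_eq_mul, ← abs_neg]
        congr 1
        field_simp
        ring

lemma exists_le_abs_sum_sub_of_separated [Nonempty Z] [Fintype ι] [DecidableEq X]
    (hsep : ∀ P : X → ℝ, (∀ x, 0 ≤ P x) → ∑ x, P x = 1 → P a = 0 →
      δ ≤ ∑ z, |W a z - ∑ x, P x * W x z|)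
    (xs xt : ι → X) :
    ∃ z, δ * #{k | xt k = a ∧ xs k ≠ xt k} / Fintype.card Z ≤
      |∑ k with xt k = a, W (xs k) z - W a z * #{k | xt k = a}| := by
  have hJ : ∀ z, ∑ k with xt k = a, W (xs k) z - W a z * #{k | xt k = a} =
      ∑ k with xt k = a ∧ xs k ≠ xt k, (W (xs k) z - W a z) := fun z => by
    rw [← nsmul_eq_mul', ← sum_const, ← sum_sub_distrib]
    refine (sum_subset (monotone_filter_right _ fun _ _ hk => hk.1) fun k hI hJ => ?_).symm
    simp only [mem_filter, mem_univ, true_and, not_and, not_not] at hI hJ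
    rw [hJ hI, hI, sub_self]
  have hsum := le_sum_abs_sum_sub_of_separated hsep {k | xt k = a ∧ xs k ≠ xt k} xs
    fun k hk => by
      simp only [mem_filter, mem_univ, true_and] at hk
      exact hk.1 ▸ hk.2
  simp_rw [← hJ] at hsum
  obtain ⟨z, -, hz⟩ := exists_le_of_sum_le univ_nonempty
    (f := fun _ => δ * #{k | xt k = a ∧ xs k ≠ xt k} / Fintype.card Z)
    (g := fun z => |∑ k with xt k = a, W (xs k) z - W a z * #{k | xt k = a}|) <| by
      rwa [sum_const, card_univ, nsmul_eq_mul, mul_div_cancel₀ _ (by positivity)]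
  exact ⟨z, hz⟩

end Separation

open Classical in
theorem atypicality_of_cheating {X Z : Type*} [Fintype X] [Fintype Z]
    (n : ℕ) (W : X → Z → ℝ) (hW0 : ∀ x z, 0 ≤ W x z) (hW1 : ∀ x, ∑ z, W x z = 1)
    (a : X) (δ κ lam : ℝ) (hδ : 0 < δ) (hκ : 0 < κ) (hlam : 0 < lam)
    (hsep : ∀ P : X → ℝ, (∀ x, 0 ≤ P x) → ∑ x, P x = 1 → P a = 0 →
      δ ≤ ∑ z, |W a z - ∑ x, P x * W x z|)
    (xs xt : Fin n → X)
    (hdist : κ * n ≤ ((univ.filter (fun k => xt k = a ∧ xs k ≠ xt k)).card : ℝ))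
    (hIa : lam * n ≤ ((univ.filter (fun k => xt k = a)).card : ℝ)) :
    ∑ zs : Fin n → Z,
        (if (∀ (x : X) (z : Z),
              |((univ.filter (fun i => xt i = x ∧ zs i = z)).card : ℝ)
                  - W x z * ((univ.filter (fun i => xt i = x)).card : ℝ)|
                ≤ (lam * δ * κ / (2 * (Fintype.card Z : ℝ))) * n
              ∧ (W x z = 0 → (univ.filter (fun i => xt i = x ∧ zs i = z)).card = 0)) then
          ∏ i, W (xs i) (zs i) else 0)
      ≤ 2 * Real.exp (-(n * (lam * δ * κ / (2 * (Fintype.card Z : ℝ))) ^ 2) / 3) := by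
  set ε := lam * δ * κ / (2 * (Fintype.card Z : ℝ))
  have : Nonempty Z := by
    by_contra h
    simpa [not_nonempty_iff.1 h] using hW1 a
  obtain ⟨z, hz⟩ := exists_le_abs_sum_sub_of_separated hsep xs xt
  have hgap : 2 * (ε * n) ≤ |∑ k with xt k = a, W (xs k) z - W a z * #{k | xt k = a}| := by
    have hn : lam * n ≤ n := hIa.trans (by exact_mod_cast card_le_univ _ |>.trans (by simp))
    refine le_trans ?_ hz
    rw [show 2 * (ε * n) = δ * (κ * (lam * n)) / Fintype.card Z by simp only [ε]; field_simp]
    gcongr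
    exact (mul_le_mul_of_nonneg_left hn hκ.le).trans hdist
  calc _ ≤ piMass (fun i => W (xs i))
        {zs | ε * n ≤ |#{i | xt i = a ∧ zs i = z} - ∑ k with xt k = a, W (xs k) z|} := by
        refine sum_le_sum fun zs _ => ?_
        split_ifs with htyp
        · rw [Set.indicator_of_mem]
          rw [Set.mem_ofPred_eq]
          have htri := abs_sub_le (∑ k with xt k = a, W (xs k) z)
            (#{i | xt i = a ∧ zs i = z} : ℝ) (W a z * #{k | xt k = a})
          rw [abs_sub_comm _ (#{i | xt i = a ∧ zs i = z} : ℝ)] at htri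
          linarith [(htyp a z).1]
        · exact Set.indicator_nonneg (fun zs _ => prod_nonneg fun i _ => hW0 _ _) zs
    _ ≤ _ := by
        simpa [filter_filter] using piMass_abs_card_sub_sum_ge_le (p := fun i => W (xs i))
          (fun i => hW0 _) (fun i => hW1 _) {k | xt k = a} z (by positivity : 0 ≤ ε)
end

section
/- Under the assumptions of the previous lemma, if D := {k ∈ I_a : x_k ≠ a} has |D| ≥ κn and |I_a| = n_a, then ‖(1/n_a)∑_{k∈I_a} W_{x_k} − W_a‖₁ ≥ κδ, and consequently there exists b ∈ Z with |(1/n_a)∑_{k∈I_a} W_{x_k}(b) − W_a(b)| ≥ κδ/|Z|. -/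
open Finset

/- If at least `κn` indices `k ∈ I_a` have `x_k ≠ a`, then the average of the
rows `W_{x_k}` over `I_a` is ℓ₁-far from `W_a`:
`‖(1/n_a)∑_{k∈I_a} W_{x_k} − W_a‖₁ ≥ κδ`, and hence some coordinate `b ∈ Z`
deviates by at least `κδ/|Z|`. -/
theorem average_row_far_from_a {X Z : Type*} [Fintype X] [Fintype Z]
    (n : ℕ) (hn : 0 < n) (W : X → Z → ℝ)
    (hW0 : ∀ x z, 0 ≤ W x z) (hW1 : ∀ x, ∑ z, W x z = 1)
    (a : X) (δ κ : ℝ) (hδ : 0 < δ) (hκ : 0 < κ)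
    (hsep : ∀ P : X → ℝ, (∀ x, 0 ≤ P x) → ∑ x, P x = 1 → P a = 0 →
      δ ≤ ∑ z, |W a z - ∑ x, P x * W x z|)
    (Ia : Finset (Fin n)) (xs : Fin n → X)
    [DecidableEq X]
    (hD : κ * n ≤ ((Ia.filter (fun k => xs k ≠ a)).card : ℝ)) :
    κ * δ ≤ ∑ z, |(1 / (Ia.card : ℝ)) * (∑ k ∈ Ia, W (xs k) z) - W a z| ∧
    ∃ b : Z, κ * δ / (Fintype.card Z : ℝ)
      ≤ |(1 / (Ia.card : ℝ)) * (∑ k ∈ Ia, W (xs k) b) - W a b| := by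
  classical
  set D := Ia.filter (fun k => xs k ≠ a) with hDdef
  have hDsub : D ⊆ Ia := Finset.filter_subset _ _
  have hd0 : (0:ℝ) < D.card := lt_of_lt_of_le (by positivity) hD
  have hdnat : 0 < D.card := by exact_mod_cast hd0
  have hmnat : 0 < Ia.card := lt_of_lt_of_le hdnat (Finset.card_le_card hDsub)
  have hm0 : (0:ℝ) < Ia.card := by exact_mod_cast hmnat
  have hmn : (Ia.card : ℝ) ≤ n := by
    exact_mod_cast (Ia.card_le_univ).trans (Fintype.card_fin n).le
  set P : X → ℝ := fun x => ((D.filter (fun k => xs k = x)).card : ℝ) / D.card with hPdef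
  have hP0 : ∀ x, 0 ≤ P x := fun x => by positivity
  have hPsum : ∑ x, P x = 1 := by
    rw [← Finset.sum_div]
    rw [show ∑ x, ((D.filter (fun k => xs k = x)).card : ℝ) = (D.card : ℝ) by
      exact_mod_cast (Finset.sum_congr rfl fun x _ => rfl).trans
        (Finset.card_eq_sum_card_fiberwise (fun k _ => Finset.mem_univ (xs k))).symm]
    exact div_self (ne_of_gt hd0)
  have hPa : P a = 0 := by
    have : D.filter (fun k => xs k = a) = ∅ := by
      apply Finset.filter_false_of_mem
      intro k hk
      exact (Finset.mem_filter.mp hk).2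
    simp [hPdef, this]
  have hPW : ∀ z, ∑ x, P x * W x z = (∑ k ∈ D, W (xs k) z) / D.card := by
    intro z
    have : ∀ x, P x * W x z = (∑ k ∈ D.filter (fun k => xs k = x), W (xs k) z) / D.card := by
      intro x
      have : ∑ k ∈ D.filter (fun k => xs k = x), W (xs k) z
          = ((D.filter (fun k => xs k = x)).card : ℝ) * W x z := by
        rw [Finset.sum_congr rfl (fun k hk => by
          rw [(Finset.mem_filter.mp hk).2]), Finset.sum_const, nsmul_eq_mul]
      rw [this, hPdef]
      ring
    rw [Finset.sum_congr rfl fun x _ => this x, ← Finset.sum_div]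
    congr 1
    exact Finset.sum_fiberwise_of_maps_to (fun k _ => Finset.mem_univ (xs k)) _
  have hsplit : ∀ z, ∑ k ∈ Ia, W (xs k) z
      = (∑ k ∈ D, W (xs k) z) + ((Ia.card : ℝ) - D.card) * W a z := by
    intro z
    have h1 := Finset.sum_filter_add_sum_filter_not Ia (fun k => xs k ≠ a)
      (fun k => W (xs k) z)
    have h2 : ∑ k ∈ Ia.filter (fun k => ¬ xs k ≠ a), W (xs k) z
        = ((Ia.filter (fun k => ¬ xs k ≠ a)).card : ℝ) * W a z := by
      rw [Finset.sum_congr rfl (fun k hk => by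
        rw [not_not.mp (Finset.mem_filter.mp hk).2]), Finset.sum_const, nsmul_eq_mul]
    have h3 : ((Ia.filter (fun k => ¬ xs k ≠ a)).card : ℝ) = (Ia.card : ℝ) - D.card := by
      have := Finset.card_filter_add_card_filter_not (s := Ia)
        (p := fun k => xs k ≠ a)
      rw [hDdef]
      push_cast [← this]
      ring
    rw [← h1, h2, h3, hDdef]
  have hkey : ∀ z, (1 / (Ia.card : ℝ)) * (∑ k ∈ Ia, W (xs k) z) - W a z
      = ((D.card : ℝ) / Ia.card) * (∑ x, P x * W x z - W a z) := by
    intro z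
    rw [hsplit z, hPW z]
    field_simp
    ring
  have hfirst : κ * δ ≤ ∑ z, |(1 / (Ia.card : ℝ)) * (∑ k ∈ Ia, W (xs k) z) - W a z| := by
    have hsum : ∑ z, |(1 / (Ia.card : ℝ)) * (∑ k ∈ Ia, W (xs k) z) - W a z|
        = ((D.card : ℝ) / Ia.card) * ∑ z, |W a z - ∑ x, P x * W x z| := by
      rw [Finset.mul_sum]
      refine Finset.sum_congr rfl fun z _ => ?_
      rw [hkey z, abs_mul, abs_of_nonneg (by positivity), abs_sub_comm]
    rw [hsum]
    have hsep' := hsep P hP0 hPsum hPa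
    have hratio : κ ≤ (D.card : ℝ) / Ia.card := by
      rw [le_div_iff₀ hm0]
      calc κ * Ia.card ≤ κ * n := by nlinarith
        _ ≤ D.card := hD
    calc κ * δ ≤ ((D.card : ℝ) / Ia.card) * δ := by nlinarith
      _ ≤ ((D.card : ℝ) / Ia.card) * ∑ z, |W a z - ∑ x, P x * W x z| := by
          apply mul_le_mul_of_nonneg_left hsep' (by positivity)
  refine ⟨hfirst, ?_⟩
  have hZne : (Finset.univ : Finset Z).Nonempty := by
    by_contra h
    rw [Finset.not_nonempty_iff_eq_empty] at h
    rw [h, Finset.sum_empty] at hfirst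
    nlinarith
  have hZ0 : (0:ℝ) < Fintype.card Z := by
    exact_mod_cast Finset.card_pos.mpr hZne
  obtain ⟨b, _, hb⟩ := Finset.exists_le_of_sum_le hZne (by
    calc ∑ _z : Z, κ * δ / (Fintype.card Z : ℝ)
        = (Fintype.card Z : ℝ) * (κ * δ / (Fintype.card Z : ℝ)) := by
          rw [Finset.sum_const, nsmul_eq_mul]; rfl
      _ = κ * δ := by field_simp
      _ ≤ ∑ z, |(1 / (Ia.card : ℝ)) * (∑ k ∈ Ia, W (xs k) z) - W a z| := hfirst)
  exact ⟨b, hb⟩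
end

section
/- Let f : X × S → Y be a two-universal hash function family, X a random variable over X, S uniform on S and independent of X, U uniform on Y and independent of S. If H_∞(X) − 2log(1/ε) ≥ log|Y|, then (1/2)‖(f(S,X), S) − (U, S)‖₁ ≤ ε. -/
open Finset

/-!
The collision probability `∑ᵢ Pᵢ²` of the hashed pair `(f(X,S), S)` is at most
`(max P_X + 1/|Y|)/|S|`: a pair of draws of `X` collides under the hash either because the
draws agree (probability `∑ P_X² ≤ max P_X`) or, by two-universality, with probability at most
`1/|Y|`. A distribution on `n` points with collision probability `c` is within `ℓ₁` distance
`√(n c - 1)` of uniform by Cauchy–Schwarz, and here `n c - 1 ≤ |Y| · max P_X ≤ ε²` by the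
min-entropy hypothesis.
-/

section Uniform

variable {ι : Type*} [Fintype ι]

theorem nonempty_of_sum_eq_one {P : ι → ℝ} (hP : ∑ i, P i = 1) : Nonempty ι :=
  univ_nonempty_iff.mp (nonempty_of_sum_ne_zero (hP ▸ one_ne_zero))

theorem sum_sq_le_iSup {P : ι → ℝ} (hP0 : ∀ i, 0 ≤ P i) (hP1 : ∑ i, P i = 1) :
    ∑ i, P i ^ 2 ≤ ⨆ i, P i :=
  calc ∑ i, P i ^ 2 ≤ ∑ i, (⨆ j, P j) * P i :=
        sum_le_sum fun i _ => by
          rw [sq]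
          exact mul_le_mul_of_nonneg_right (le_ciSup (Set.finite_range P).bddAbove i) (hP0 i)
    _ = ⨆ i, P i := by rw [← mul_sum, hP1, mul_one]

theorem iSup_pos_of_sum_eq_one {P : ι → ℝ} (hP1 : ∑ i, P i = 1) : 0 < ⨆ i, P i := by
  obtain ⟨i, hi⟩ : ∃ i, 0 < P i := by
    by_contra! h
    linarith [sum_nonpos fun i (_ : i ∈ univ) => h i]
  exact hi.trans_le (le_ciSup (Set.finite_range P).bddAbove i)

theorem sum_sq_sub_inv_card {P : ι → ℝ} (hP : ∑ i, P i = 1) :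
    ∑ i, (P i - 1 / Fintype.card ι) ^ 2 = ∑ i, P i ^ 2 - 1 / Fintype.card ι := by
  have := nonempty_of_sum_eq_one hP
  have hn : (Fintype.card ι : ℝ) ≠ 0 := Nat.cast_ne_zero.mpr Fintype.card_ne_zero
  simp only [sub_sq, sum_add_distrib, sum_sub_distrib, ← sum_mul, ← mul_sum, hP, sum_const,
    card_univ, nsmul_eq_mul]
  field_simp
  ring

theorem sq_sum_abs_sub_inv_card_le {P : ι → ℝ} (hP : ∑ i, P i = 1) :
    (∑ i, |P i - 1 / Fintype.card ι|) ^ 2 ≤ Fintype.card ι * ∑ i, P i ^ 2 - 1 := by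
  have := nonempty_of_sum_eq_one hP
  have hn : (Fintype.card ι : ℝ) ≠ 0 := Nat.cast_ne_zero.mpr Fintype.card_ne_zero
  calc (∑ i, |P i - 1 / Fintype.card ι|) ^ 2
      ≤ Fintype.card ι * ∑ i, |P i - 1 / Fintype.card ι| ^ 2 := by
        simpa using
          sq_sum_le_card_mul_sum_sq (s := univ) (f := fun i => |P i - 1 / Fintype.card ι|)
    _ = Fintype.card ι * ∑ i, P i ^ 2 - 1 := by
        simp only [sq_abs, sum_sq_sub_inv_card hP]
        field_simp

end Uniform

theorem mul_le_sq_of_logb_le {b n M ε : ℝ} (hb : 1 < b) (hn : 0 < n) (hM : 0 < M) (hε : 0 < ε)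
    (h : Real.logb b n ≤ -Real.logb b M - 2 * Real.logb b (1 / ε)) : n * M ≤ ε ^ 2 := by
  rw [← Real.logb_le_logb hb (by positivity) (by positivity), Real.logb_mul hn.ne' hM.ne',
    Real.logb_pow]
  rw [one_div, Real.logb_inv] at h
  push_cast
  linarith

section Hashing

variable {X S Y : Type*} [Fintype Y] [DecidableEq Y]

theorem sum_sq_sum_fiber [Fintype X] (f : X → S → Y) (PX : X → ℝ) (s : S) :
    ∑ y, (∑ x with f x s = y, PX x) ^ 2
      = ∑ a, ∑ b, if f a s = f b s then PX a * PX b else 0 := by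
  simp only [sum_filter, sq, sum_mul_sum]
  rw [sum_comm]
  refine sum_congr rfl fun a _ => ?_
  rw [sum_comm]
  refine sum_congr rfl fun b _ => ?_
  simp only [ite_mul, zero_mul, mul_ite, mul_zero]
  rw [sum_ite_eq univ (f b s) (fun y => if f a s = y then PX a * PX b else 0)]
  simp only [mem_univ, if_true]

theorem sum_sum_sq_sum_fiber [Fintype X] [Fintype S] (f : X → S → Y) (PX : X → ℝ) :
    ∑ s, ∑ y, (∑ x with f x s = y, PX x) ^ 2
      = ∑ a, ∑ b, (#{s | f a s = f b s} : ℝ) * (PX a * PX b) := by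
  simp only [sum_sq_sum_fiber]
  rw [sum_comm]
  refine sum_congr rfl fun a _ => ?_
  rw [sum_comm]
  refine sum_congr rfl fun b _ => ?_
  rw [← sum_filter, sum_const, nsmul_eq_mul]

theorem card_collisions_le [Fintype S] [DecidableEq X] {f : X → S → Y}
    (hf : ∀ a b, a ≠ b → (#{s | f a s = f b s} : ℝ) ≤ Fintype.card S / Fintype.card Y)
    (a b : X) :
    (#{s | f a s = f b s} : ℝ)
      ≤ (if a = b then (Fintype.card S : ℝ) else 0) + Fintype.card S / Fintype.card Y := by
  split_ifs with hab
  · have : (#{s | f a s = f b s} : ℝ) ≤ Fintype.card S := by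
      exact_mod_cast card_filter_le univ _
    have : (0 : ℝ) ≤ Fintype.card S / Fintype.card Y := by positivity
    linarith
  · rw [zero_add]
    exact hf a b hab

theorem sum_sum_sq_sum_fiber_le [Fintype X] [Fintype S] {f : X → S → Y}
    (hf : ∀ a b, a ≠ b → (#{s | f a s = f b s} : ℝ) ≤ Fintype.card S / Fintype.card Y)
    {PX : X → ℝ} (hPX0 : ∀ x, 0 ≤ PX x) (hPX1 : ∑ x, PX x = 1) :
    ∑ s, ∑ y, (∑ x with f x s = y, PX x) ^ 2
      ≤ Fintype.card S * (∑ x, PX x ^ 2 + 1 / Fintype.card Y) := by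
  classical
  set nS : ℝ := (Fintype.card S : ℝ)
  set nY : ℝ := (Fintype.card Y : ℝ)
  calc ∑ s, ∑ y, (∑ x with f x s = y, PX x) ^ 2
      = ∑ a, ∑ b, (#{s | f a s = f b s} : ℝ) * (PX a * PX b) := sum_sum_sq_sum_fiber f PX
    _ ≤ ∑ a, ∑ b, ((if a = b then nS else 0) + nS / nY) * (PX a * PX b) :=
        sum_le_sum fun a _ => sum_le_sum fun b _ =>
          mul_le_mul_of_nonneg_right (card_collisions_le hf a b) (mul_nonneg (hPX0 a) (hPX0 b))
    _ = nS * (∑ x, PX x ^ 2 + 1 / nY) := by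
        simp only [add_mul, sum_add_distrib, ite_mul, zero_mul, sum_ite_eq, mem_univ, if_true,
          ← mul_sum, ← sum_mul, hPX1, sq]
        ring

/-- The joint distribution of `(f(X,S), S)` for a uniform seed `S`. -/
noncomputable def hashedDist [Fintype X] [Fintype S] (f : X → S → Y) (PX : X → ℝ)
    (z : Y × S) : ℝ :=
  1 / Fintype.card S * ∑ x with f x z.2 = z.1, PX x

theorem sum_hashedDist [Fintype X] [Fintype S] [Nonempty S] (f : X → S → Y) {PX : X → ℝ}
    (hPX1 : ∑ x, PX x = 1) : ∑ z, hashedDist f PX z = 1 := by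
  simp only [hashedDist, Fintype.sum_prod_type, sum_comm (γ := Y), ← mul_sum,
    sum_fiberwise univ (fun x => f x _) PX, hPX1, mul_one, sum_const, card_univ, nsmul_eq_mul]
  exact one_div_mul_cancel (by positivity)

theorem sum_hashedDist_sq_le [Fintype X] [Fintype S] [Nonempty S] {f : X → S → Y}
    (hf : ∀ a b, a ≠ b → (#{s | f a s = f b s} : ℝ) ≤ Fintype.card S / Fintype.card Y)
    {PX : X → ℝ} (hPX0 : ∀ x, 0 ≤ PX x) (hPX1 : ∑ x, PX x = 1) :
    ∑ z, hashedDist f PX z ^ 2 ≤ (∑ x, PX x ^ 2 + 1 / Fintype.card Y) / Fintype.card S := by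
  simp only [hashedDist, Fintype.sum_prod_type, sum_comm (γ := Y), mul_pow, ← mul_sum]
  calc (1 / (Fintype.card S : ℝ)) ^ 2 * ∑ s, ∑ y, (∑ x with f x s = y, PX x) ^ 2
      ≤ (1 / (Fintype.card S : ℝ)) ^ 2
          * (Fintype.card S * (∑ x, PX x ^ 2 + 1 / Fintype.card Y)) :=
        mul_le_mul_of_nonneg_left (sum_sum_sq_sum_fiber_le hf hPX0 hPX1) (by positivity)
    _ = _ := by field_simp

theorem sq_sum_abs_hashedDist_sub_le [Fintype X] [Fintype S] [Nonempty S] {f : X → S → Y}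
    (hf : ∀ a b, a ≠ b → (#{s | f a s = f b s} : ℝ) ≤ Fintype.card S / Fintype.card Y)
    {PX : X → ℝ} (hPX0 : ∀ x, 0 ≤ PX x) (hPX1 : ∑ x, PX x = 1) :
    (∑ z, |hashedDist f PX z - 1 / Fintype.card (Y × S)|) ^ 2
      ≤ Fintype.card Y * ⨆ x, PX x := by
  have hP1 := sum_hashedDist f hPX1
  have : Nonempty Y := (nonempty_of_sum_eq_one hP1).map Prod.fst
  have hnS : (Fintype.card S : ℝ) ≠ 0 := by positivity
  have hnY : (Fintype.card Y : ℝ) ≠ 0 := by positivity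
  calc (∑ z, |hashedDist f PX z - 1 / Fintype.card (Y × S)|) ^ 2
      ≤ Fintype.card (Y × S) * ∑ z, hashedDist f PX z ^ 2 - 1 := sq_sum_abs_sub_inv_card_le hP1
    _ ≤ Fintype.card Y * Fintype.card S * (((⨆ x, PX x) + 1 / Fintype.card Y) / Fintype.card S)
          - 1 := by
        rw [Fintype.card_prod, Nat.cast_mul]
        gcongr
        exact (sum_hashedDist_sq_le hf hPX0 hPX1).trans (by gcongr; exact sum_sq_le_iSup hPX0 hPX1)
    _ = Fintype.card Y * ⨆ x, PX x := by field_simp; ring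

end Hashing

open Classical in
theorem leftover_hash_lemma {X S Y : Type*} [Fintype X] [Fintype S] [Fintype Y]
    (f : X → S → Y)
    (huniv : ∀ x₀ x₁ : X, x₀ ≠ x₁ →
      ((univ.filter (fun s => f x₀ s = f x₁ s)).card : ℝ) / (Fintype.card S : ℝ)
        ≤ 1 / (Fintype.card Y : ℝ))
    (PX : X → ℝ) (hPX0 : ∀ x, 0 ≤ PX x) (hPX1 : ∑ x, PX x = 1)
    (ε : ℝ) (hε : 0 < ε)
    (hmin : Real.logb 2 (Fintype.card Y)
      ≤ (- Real.logb 2 (⨆ x, PX x)) - 2 * Real.logb 2 (1 / ε)) :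
    (1 / 2) * ∑ y : Y, ∑ s : S,
        |(1 / (Fintype.card S : ℝ)) * (∑ x ∈ univ.filter (fun x => f x s = y), PX x)
          - (1 / (Fintype.card Y : ℝ)) * (1 / (Fintype.card S : ℝ))| ≤ ε := by
  rcases isEmpty_or_nonempty S with hS | hS
  · simp only [univ_eq_empty, sum_empty, sum_const_zero, mul_zero]
    exact hε.le
  have hf : ∀ a b, a ≠ b →
      (#{s | f a s = f b s} : ℝ) ≤ Fintype.card S / Fintype.card Y := fun a b hab => by
    have := huniv a b hab
    rwa [div_le_iff₀ (by positivity), one_div_mul_eq_div] at this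
  obtain ⟨x⟩ := nonempty_of_sum_eq_one hPX1
  have : Nonempty Y := ⟨f x hS.some⟩
  have hdist : ∑ z, |hashedDist f PX z - 1 / Fintype.card (Y × S)| ≤ ε := by
    refine (pow_le_pow_iff_left₀ (sum_nonneg fun _ _ => abs_nonneg _) hε.le two_ne_zero).mp ?_
    calc _ ≤ Fintype.card Y * ⨆ x, PX x := sq_sum_abs_hashedDist_sub_le (f := f) hf hPX0 hPX1
      _ ≤ ε ^ 2 :=
        mul_le_sq_of_logb_le one_lt_two (by positivity) (iSup_pos_of_sum_eq_one hPX1) hε hmin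
  calc _ = (1 / 2) * ∑ z, |hashedDist f PX z - 1 / Fintype.card (Y × S)| := by
        simp only [Fintype.sum_prod_type, hashedDist, Fintype.card_prod, Nat.cast_mul,
          one_div_mul_one_div]
    _ ≤ ∑ z, |hashedDist f PX z - 1 / Fintype.card (Y × S)| := by
        rw [one_div_mul_eq_div]
        exact half_le_self (sum_nonneg fun _ _ => abs_nonneg _)
    _ ≤ ε := hdist
end

section
/- Let W : U × V → {0,1}² be a non-signaling box with conditional distribution Ŵ(yv|xu) := (1/|V|)·W(xy|uv)/W^A(x|u) (defined when W^A(x|u) ≠ 0, where W^A(x|u) := ∑_y W(xy|uv)). Suppose (x₀,u₀) and (x₁,u₁) ≠ (x₀,u₀) with u₁ ≠ u₀ satisfy Ŵ_{x₀u₀} = Ŵ_{x₁u₁}, W^A(x₁|u₁) ≠ 0, and W^A(x₀|u₀) ≤ W^A(x₁|u₁). Set p := W^A(x₀|u₀)/W^A(x₁|u₁). Then W(x₀y|u₀v) = p·W(x₁y|u₁v) for all y ∈ {0,1}, v ∈ V, and W((1−x₀)y|u₀v) = (1−p)·W(x₁y|u₁v) + W((1−x₁)y|u₁v) for all y, v.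 -/
open Finset

/- Lemma used to reduce boxes with redundant inputs. `W^A(x|u)` is Alice's
marginal (independent of `v` by non-signaling, given here as `WA` together with
the hypothesis `hWA`), and the rows of `Ŵ(yv|xu) = (1/|V|)W(xy|uv)/W^A(x|u)`
indexed by `(x₀,u₀)` and `(x₁,u₁)` coincide. Then
`W(x₀y|u₀v) = p·W(x₁y|u₁v)` and
`W((1−x₀)y|u₀v) = (1−p)·W(x₁y|u₁v) + W((1−x₁)y|u₁v)` with
`p = W^A(x₀|u₀)/W^A(x₁|u₁)`. -/
theorem reduced_box_identities {U V : Type*} [Fintype U] [Fintype V]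
    (W : Bool → Bool → U → V → ℝ) (hW0 : ∀ x y u v, 0 ≤ W x y u v)
    (WA : Bool → U → ℝ) (hWA : ∀ x u v, (∑ y, W x y u v) = WA x u)
    (hNSB : ∀ (y : Bool) (v : V) (u u' : U), ∑ x, W x y u v = ∑ x, W x y u' v)
    (x₀ x₁ : Bool) (u₀ u₁ : U) (hu : u₁ ≠ u₀)
    (hhat : ∀ (y : Bool) (v : V),
      (1 / (Fintype.card V : ℝ)) * (W x₀ y u₀ v / WA x₀ u₀)
        = (1 / (Fintype.card V : ℝ)) * (W x₁ y u₁ v / WA x₁ u₁))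
    (h1 : WA x₁ u₁ ≠ 0) (h2 : WA x₀ u₀ ≤ WA x₁ u₁) :
    (∀ (y : Bool) (v : V),
      W x₀ y u₀ v = (WA x₀ u₀ / WA x₁ u₁) * W x₁ y u₁ v) ∧
    (∀ (y : Bool) (v : V),
      W (!x₀) y u₀ v = (1 - WA x₀ u₀ / WA x₁ u₁) * W x₁ y u₁ v + W (!x₁) y u₁ v) := by
  have key : ∀ (y : Bool) (v : V),
      W x₀ y u₀ v = (WA x₀ u₀ / WA x₁ u₁) * W x₁ y u₁ v := by
    intro y v
    have hc : (Fintype.card V : ℝ) ≠ 0 := by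
      have : Nonempty V := ⟨v⟩
      exact_mod_cast Fintype.card_ne_zero
    have h := mul_left_cancel₀ (one_div_ne_zero hc) (hhat y v)
    by_cases h0 : WA x₀ u₀ = 0
    · have hsum := hWA x₀ u₀ v
      rw [h0, Fintype.sum_bool] at hsum
      have hz : W x₀ y u₀ v = 0 := by
        cases y <;>
          linarith [hW0 x₀ true u₀ v, hW0 x₀ false u₀ v]
      rw [hz, h0]
      simp
    · have := div_eq_div_iff h0 h1 |>.mp h
      field_simp
      linarith [this]
  refine ⟨key, ?_⟩
  intro y v
  have hNS := hNSB y v u₀ u₁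
  rw [Fintype.sum_bool, Fintype.sum_bool] at hNS
  have hk := key y v
  have e0 : W x₀ y u₀ v + W (!x₀) y u₀ v = W true y u₀ v + W false y u₀ v := by
    cases x₀ <;> simp <;> ring
  have e1 : W x₁ y u₁ v + W (!x₁) y u₁ v = W true y u₁ v + W false y u₁ v := by
    cases x₁ <;> simp <;> ring
  nlinarith [e0, e1]
end

section
/- Let W : {0,1} × V → {0,1}² be a non-signaling box with convex combination coefficients as above: defining a_x := λ_x·W^A(0|1)/W^A(x|0) and b_x := μ_x·W^A(1|1)/W^A(x|0) for x ∈ {0,1} (where λ₁ = 1−λ₀, μ₁ = 1−μ₀), the non-signaling conditions imply that for all (y,v), W(0y|0v) + W(1y|0v) = (a₀+b₀)W(0y|0v) + (a₁+b₁)W(1y|0v); if moreover Ŵ_{00} ≠ Ŵ_{10}, then a₀+b₀ = a₁+b₁ = 1. -/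
open Finset

/- With `a_x := λ_x·W^A(0|1)/W^A(x|0)` and `b_x := μ_x·W^A(1|1)/W^A(x|0)`, the
non-signaling conditions imply
`W(0y|0v) + W(1y|0v) = (a₀+b₀)W(0y|0v) + (a₁+b₁)W(1y|0v)` for all `(y,v)`;
and if moreover `Ŵ_{00} ≠ Ŵ_{10}`, then `a₀+b₀ = a₁+b₁ = 1`. -/
theorem nonsignaling_coefficient_identity {V : Type*} [Fintype V]
    (W : Bool → Bool → Bool → V → ℝ) (hW0 : ∀ x y u v, 0 ≤ W x y u v)
    (WA : Bool → Bool → ℝ) (hWA : ∀ x u v, (∑ y, W x y u v) = WA x u)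
    (hWApos : ∀ x u, 0 < WA x u)
    (hNSB : ∀ (y : Bool) (v : V) (u u' : Bool), ∑ x, W x y u v = ∑ x, W x y u' v)
    (lam0 lam1 mu0 mu1 : ℝ) (hlam0 : 0 ≤ lam0) (hlam1 : 0 ≤ lam1)
    (hmu0 : 0 ≤ mu0) (hmu1 : 0 ≤ mu1)
    (hlamsum : lam0 + lam1 = 1) (hmusum : mu0 + mu1 = 1)
    (hconv1 : ∀ (y : Bool) (v : V), W false y true v / WA false true
      = lam0 * (W false y false v / WA false false)
        + lam1 * (W true y false v / WA true false))
    (hconv2 : ∀ (y : Bool) (v : V), W true y true v / WA true true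
      = mu0 * (W false y false v / WA false false)
        + mu1 * (W true y false v / WA true false)) :
    (∀ (y : Bool) (v : V), W false y false v + W true y false v
      = (lam0 * WA false true / WA false false + mu0 * WA true true / WA false false)
          * W false y false v
        + (lam1 * WA false true / WA true false + mu1 * WA true true / WA true false)
          * W true y false v) ∧
    ((∃ (y : Bool) (v : V),
        W false y false v / WA false false ≠ W true y false v / WA true false) →
      lam0 * WA false true / WA false false + mu0 * WA true true / WA false false = 1 ∧
      lam1 * WA false true / WA true false + mu1 * WA true true / WA true false = 1) := by

  have hne : ∀ x u, WA x u ≠ 0 := fun x u => (hWApos x u).ne'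
  have key : ∀ (y : Bool) (v : V), W false y false v + W true y false v
      = (lam0 * WA false true / WA false false + mu0 * WA true true / WA false false)
          * W false y false v
        + (lam1 * WA false true / WA true false + mu1 * WA true true / WA true false)
          * W true y false v := by
    intro y v
    have h1 := hconv1 y v
    have h2 := hconv2 y v
    have hns := hNSB y v false true
    simp only [Fintype.sum_bool] at hns
    have e1 : W false y true v = WA false true * (W false y true v / WA false true) :=
      (mul_div_cancel₀ _ (hne false true)).symm
    have e2 : W true y true v = WA true true * (W true y true v / WA true true) :=
      (mul_div_cancel₀ _ (hne true true)).symm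
    rw [h1] at e1
    rw [h2] at e2
    have : W false y false v + W true y false v = W false y true v + W true y true v := by
      linarith [hns]
    rw [this, e1, e2]
    field_simp
    ring
  refine ⟨key, ?_⟩
  rintro ⟨y, v, hyneq⟩
  set A := lam0 * WA false true / WA false false + mu0 * WA true true / WA false false with hAdef
  set B := lam1 * WA false true / WA true false + mu1 * WA true true / WA true false with hBdef
  have hA0 := hWA false false v
  have hB0 := hWA true false v
  simp only [Fintype.sum_bool] at hA0 hB0
  have hWAid : WA false false + WA true false = A * WA false false + B * WA true false := by
    linear_combination key false v + key true v + (A - 1) * hA0 + (B - 1) * hB0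
  have hyv := key y v
  by_cases hA1 : A = 1
  · have hB1 : B = 1 := by
      have : (B - 1) * WA true false = 0 := by
        rw [hA1] at hWAid; linarith
      rcases mul_eq_zero.mp this with h | h
      · linarith
      · exact absurd h (hne true false)
    exact ⟨hA1, hB1⟩
  · exfalso
    apply hyneq
    have hc : (1 - A) * W false y false v = (B - 1) * W true y false v := by
      linarith [hyv]
    have hd : (1 - A) * WA false false = (B - 1) * WA true false := by
      linarith [hWAid]
    have hcancel : W false y false v * WA true false = W true y false v * WA false false := by
      have h1A : (1 - A) ≠ 0 := fun h => hA1 (by linarith [h]; )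
      apply mul_left_cancel₀ h1A
      calc (1 - A) * (W false y false v * WA true false)
          = ((1 - A) * W false y false v) * WA true false := by ring
        _ = ((B - 1) * W true y false v) * WA true false := by rw [hc]
        _ = W true y false v * ((B - 1) * WA true false) := by ring
        _ = W true y false v * ((1 - A) * WA false false) := by rw [hd]
        _ = (1 - A) * (W true y false v * WA false false) := by ring
    rw [div_eq_div_iff (hne false false) (hne true false)]
    exact hcancel
end

section
/- Let W : U × V → {0,1}² be a non-signaling box, let Ŵ_{x₀u₀} be an extreme point of the convex hull of the rows {Ŵ_{xu}}, and suppose W is perfectly correlated on input pair (u₀,v₀) (i.e., W(01|u₀v₀) = W(10|u₀v₀) = 0), with x₀ = 0. If Ŵ_{1u₀} = ∑_z λ_z Ŵ_z is a convex combination of extreme rows with λ_{0u₁} > 0 for some u₁ ≠ u₀, then W(00|u₁v₀) = 0 and W(10|u₁v₀) = W(00|u₀v₀). -/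
open Finset

/- Row `(x,u)` of the matrix `Ŵ(yv|xu) := (1/|V|)·W(xy|uv)/W^A(x|u)`. -/
noncomputable def hatRow {U V : Type*} [Fintype V] (W : Bool → Bool → U → V → ℝ)
    (WA : Bool → U → ℝ) (z : Bool × U) (yv : Bool × V) : ℝ :=
  (1 / (Fintype.card V : ℝ)) * (W z.1 yv.1 z.2 yv.2 / WA z.1 z.2)

/- `Ŵ_c` is an extreme row: it is not a convex combination of the other rows. -/
def IsExtremeRow {U V : Type*} [Fintype U] [Fintype V] (W : Bool → Bool → U → V → ℝ)
    (WA : Bool → U → ℝ) (c : Bool × U) : Prop :=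
  ∀ P : Bool × U → ℝ, (∀ z, 0 ≤ P z) → (∑ z, P z = 1) → P c = 0 →
    ∃ yv : Bool × V, hatRow W WA c yv ≠ ∑ z, P z * hatRow W WA z yv

/- If `Ŵ_{0u₀}` is an extreme row, `W` is perfectly correlated on `(u₀,v₀)`,
and `Ŵ_{1u₀} = ∑_z λ_z Ŵ_z` is a convex combination of extreme rows with
`λ_{0u₁} > 0` for some `u₁ ≠ u₀`, then `W(00|u₁v₀) = 0` and
`W(10|u₁v₀) = W(00|u₀v₀)`. -/
theorem correlated_inputs_force_zeros {U V : Type*} [Fintype U] [Fintype V]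
    (W : Bool → Bool → U → V → ℝ) (hW0 : ∀ x y u v, 0 ≤ W x y u v)
    (WA : Bool → U → ℝ) (hWA : ∀ x u v, (∑ y, W x y u v) = WA x u)
    (hWApos : ∀ x u, 0 < WA x u)
    (hNSB : ∀ (y : Bool) (v : V) (u u' : U), ∑ x, W x y u v = ∑ x, W x y u' v)
    (u₀ u₁ : U) (hu : u₁ ≠ u₀) (v₀ : V)
    (hext : IsExtremeRow W WA (false, u₀))
    (hcorr1 : W false true u₀ v₀ = 0) (hcorr2 : W true false u₀ v₀ = 0)
    (lam : Bool × U → ℝ) (hlam0 : ∀ z, 0 ≤ lam z) (hlam1 : ∑ z, lam z = 1)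
    (hlamext : ∀ z, lam z ≠ 0 → IsExtremeRow W WA z)
    (hlampos : 0 < lam (false, u₁))
    (hconv : ∀ yv : Bool × V,
      hatRow W WA (true, u₀) yv = ∑ z, lam z * hatRow W WA z yv) :
    W false false u₁ v₀ = 0 ∧ W true false u₁ v₀ = W false false u₀ v₀ := by
  have hcard : (0:ℝ) < (Fintype.card V : ℝ) := by
    exact_mod_cast Fintype.card_pos_iff.mpr ⟨v₀⟩
  have hzero : ∑ z, lam z * hatRow W WA z (false, v₀) = 0 := by
    rw [← hconv (false, v₀)]
    simp [hatRow, hcorr2]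
  have hterm : ∀ z ∈ (Finset.univ : Finset (Bool × U)),
      lam z * hatRow W WA z (false, v₀) = 0 := by
    rw [← Finset.sum_eq_zero_iff_of_nonneg]
    · exact hzero
    · intro z _
      exact mul_nonneg (hlam0 z) (mul_nonneg (by positivity)
        (div_nonneg (hW0 _ _ _ _) (hWApos z.1 z.2).le))
  have h1 : W false false u₁ v₀ = 0 := by
    have := hterm (false, u₁) (Finset.mem_univ _)
    rcases mul_eq_zero.mp this with h | h
    · exact absurd h hlampos.ne'
    · unfold hatRow at h
      rcases mul_eq_zero.mp h with h | h
      · exact absurd h (by positivity)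
      · exact (div_eq_zero_iff.mp h).resolve_right (hWApos false u₁).ne'
  refine ⟨h1, ?_⟩
  have hNS := hNSB false v₀ u₁ u₀
  simp [Fintype.sum_bool, h1, hcorr2] at hNS
  linarith
end
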